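/- arXiv:1905.03234 — 5 statements merged into one kernel-verified Lean document; each statement's English description precedes it below -/
import Mathlib

section
/- Let ϑ be a real number with 0 < ϑ ≤ π/6, let N ≥ 3 be an integer, and let θ_1, …, θ_N be real numbers (indexed cyclically mod N) satisfying: θ_1 + ⋯ + θ_N = 2π; ϑ ≤ θ_i ≤ π − 2ϑ for every i; and |θ_i + θ_{i+1} − π| < ϑ for every i (indices mod N). Then N = 4. -/
/-!
Summing the quasi-singularity condition over all N adjacent pairs counts every angle twice, so
`|2 · 2π - N π| < N ϑ ≤ N π / 6`, i.e. `6 |4 - N| < N`, which forces `N = 4`.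
-/

open Finset

theorem Finset.sum_range_comp_succ_mod {M : Type*} [AddCommMonoid M] (f : ℕ → M) (N : ℕ) :
    ∑ i ∈ range N, f ((i + 1) % N) = ∑ i ∈ range N, f i := by
  cases N with
  | zero => rfl
  | succ n =>
    rw [sum_range_succ, Nat.mod_self, sum_range_succ' f]
    refine congrArg (· + f 0) (sum_congr rfl fun i hi => ?_)
    rw [Nat.mod_eq_of_lt (by simpa using hi)]

theorem sum_range_adjacent_sub (θ : ℕ → ℝ) (N : ℕ) (c : ℝ) :
    ∑ i ∈ range N, (θ i + θ ((i + 1) % N) - c) = 2 * ∑ i ∈ range N, θ i - N * c := by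
  rw [sum_sub_distrib, sum_add_distrib, sum_range_comp_succ_mod, sum_const, card_range,
    nsmul_eq_mul]
  ring

theorem abs_two_mul_sum_range_sub_lt {θ : ℕ → ℝ} {N : ℕ} {c ε : ℝ} (hN : 0 < N)
    (hadj : ∀ i < N, |θ i + θ ((i + 1) % N) - c| < ε) :
    |2 * ∑ i ∈ range N, θ i - N * c| < N * ε :=
  calc |2 * ∑ i ∈ range N, θ i - N * c|
      = |∑ i ∈ range N, (θ i + θ ((i + 1) % N) - c)| := by rw [sum_range_adjacent_sub]
    _ ≤ ∑ i ∈ range N, |θ i + θ ((i + 1) % N) - c| := abs_sum_le_sum_abs _ _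
    _ < ∑ _i ∈ range N, ε :=
        sum_lt_sum_of_nonempty (nonempty_range_iff.2 hN.ne') fun i hi => hadj i (mem_range.1 hi)
    _ = N * ε := by rw [sum_const, card_range, nsmul_eq_mul]

theorem Nat.eq_four_of_abs_four_sub_mul_six_lt {N : ℕ} (h : |4 - (N : ℝ)| * 6 < N) : N = 4 := by
  have hle := le_abs_self (4 - (N : ℝ))
  have hge := neg_abs_le (4 - (N : ℝ))
  rcases lt_trichotomy N 4 with hlt | heq | hgt
  · have : (N : ℝ) ≤ 3 := by exact_mod_cast Nat.le_of_lt_succ hlt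
    linarith
  · exact heq
  · have : (5 : ℝ) ≤ N := by exact_mod_cast hgt
    linarith

theorem interior_quasi_singular_vertex_has_four_triangles_general
    (ϑ : ℝ) (hϑ6 : ϑ ≤ Real.pi / 6)
    (N : ℕ) (θ : ℕ → ℝ)
    (hsum : ∑ i ∈ Finset.range N, θ i = 2 * Real.pi)
    (hadj : ∀ i < N, |θ i + θ ((i + 1) % N) - Real.pi| < ϑ) :
    N = 4 := by
  have hN : 0 < N := by
    refine Nat.pos_of_ne_zero ?_
    rintro rfl
    simp [Real.pi_ne_zero] at hsum
  have hdev := abs_two_mul_sum_range_sub_lt hN hadj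
  rw [hsum, show 2 * (2 * Real.pi) - N * Real.pi = (4 - N) * Real.pi by ring, abs_mul,
    abs_of_pos Real.pi_pos] at hdev
  refine Nat.eq_four_of_abs_four_sub_mul_six_lt ?_
  have hNϑ : (N : ℝ) * ϑ ≤ N * (Real.pi / 6) := by gcongr
  nlinarith [Real.pi_pos]

/-- Arithmetic content of Lemma 2.1: an interior quasi singular vertex has exactly 4
triangles sharing it. -/
theorem interior_quasi_singular_vertex_has_four_triangles
    (ϑ : ℝ) (hϑ0 : 0 < ϑ) (hϑ6 : ϑ ≤ Real.pi / 6)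
    (N : ℕ) (hN : 3 ≤ N) (θ : ℕ → ℝ)
    (hsum : ∑ i ∈ Finset.range N, θ i = 2 * Real.pi)
    (hlow : ∀ i < N, ϑ ≤ θ i)
    (hhigh : ∀ i < N, θ i ≤ Real.pi - 2 * ϑ)
    (hadj : ∀ i < N, |θ i + θ ((i + 1) % N) - Real.pi| < ϑ) :
    N = 4 :=
  interior_quasi_singular_vertex_has_four_triangles_general ϑ hϑ6 N θ hsum hadj
end

section
/- Let A, B, V ∈ ℝ² be affinely independent points, let K = convexHull{A, B, V}, and let β : ℝ² → ℝ be the unique affine function with β(V) = 1 and β(A) = β(B) = 0. Define the sting function s(x) = e(β(x)) where e(t) = (56t³ − 63t² + 18t − 1)/10. Then for every polynomial q : ℝ² → ℝ of total degree at most 3, ∫_K s(x) q(x) dx = (|K|/100) · q(V), where |K| denotes the two-dimensional Lebesgue measure (area) of K and the integral is with respect to Lebesgue measure on ℝ². -/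
/-!
Pull everything back along the affine chart `(u, v) ↦ A + u • (V - A) + v • (B - A)`, which maps
the standard triangle `T` onto `K` and `(1, 0)` to `V`. Under it `β` becomes `u`, `q` becomes a
polynomial `P` of total degree at most 3, and both `∫_K s q` and `|K|` acquire the same Jacobian
factor. On `T`, Fubini turns `∫ e(u) uⁱ vʲ` into `∫₀¹ e(u) uⁱ (1 - u)ʲ⁺¹ / (j + 1) du`, which for
`i + j ≤ 3` is `1/200` if `j = 0` and `0` otherwise; so `∫_T e(u) P = P(1, 0) / 200 = |T| P(1, 0) / 100`.
-/

open MeasureTheory Set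

namespace MvPolynomial

variable {σ τ R : Type*} [CommSemiring R]

theorem totalDegree_bind₁_le {f : σ → MvPolynomial τ R} (hf : ∀ i, (f i).totalDegree ≤ 1)
    (p : MvPolynomial σ R) : (bind₁ f p).totalDegree ≤ p.totalDegree := by
  conv_lhs => rw [p.as_sum, map_sum]
  refine totalDegree_finsetSum_le fun d hd => ?_
  rw [bind₁_monomial]
  calc (C (coeff d p) * ∏ i ∈ d.support, f i ^ d i).totalDegree
      ≤ ∑ i ∈ d.support, d i * (f i).totalDegree := by
        refine (totalDegree_mul _ _).trans ?_
        rw [totalDegree_C, zero_add]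
        exact (totalDegree_finsetProd _ _).trans (Finset.sum_le_sum fun i _ => totalDegree_pow _ _)
    _ ≤ ∑ i ∈ d.support, d i := Finset.sum_le_sum fun i _ => by simpa using Nat.mul_le_mul_left _ (hf i)
    _ ≤ p.totalDegree := le_totalDegree hd

theorem exists_totalDegree_le_eval_add_smul_add_smul (q : MvPolynomial σ R) (a b c : σ → R) :
    ∃ P : MvPolynomial (Fin 2) R, P.totalDegree ≤ q.totalDegree ∧
      ∀ u v : R, eval (a + u • b + v • c) q = eval ![u, v] P := by
  refine ⟨bind₁ (fun i => C (a i) + b i • X 0 + c i • X 1) q,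
    totalDegree_bind₁_le (fun i => ?_) q, fun u v => ?_⟩
  · have hX (j : Fin 2) : (X j : MvPolynomial (Fin 2) R).totalDegree ≤ 1 :=
      (totalDegree_monomial_le _ _).trans (by simp)
    refine (totalDegree_add _ _).trans (max_le ((totalDegree_add _ _).trans (max_le ?_ ?_)) ?_)
    · simp
    · exact (totalDegree_smul_le _ _).trans (hX 0)
    · exact (totalDegree_smul_le _ _).trans (hX 1)
  · change eval₂Hom (RingHom.id R) _ q = eval₂Hom (RingHom.id R) ![u, v] (bind₁ _ q)
    rw [eval₂Hom_bind₁]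
    congr 2
    funext i
    simp [mul_comm]

end MvPolynomial

namespace ContinuousAffineMap

variable {E F : Type*} [NormedAddCommGroup E] [NormedSpace ℝ E] [FiniteDimensional ℝ E]
  [MeasurableSpace E] [BorelSpace E] (μ : Measure E) [μ.IsAddHaarMeasure]
  [NormedAddCommGroup F] [NormedSpace ℝ F] {φ : E →ᴬ[ℝ] E} {s : Set E}

theorem setIntegral_image (hφ : Function.Injective φ) (hs : MeasurableSet s) (g : E → F) :
    ∫ x in φ '' s, g x ∂μ = |φ.contLinear.det| • ∫ x in s, g (φ x) ∂μ := by
  rw [integral_image_eq_integral_abs_det_fderiv_smul μ hs (fun _ _ => φ.hasFDerivWithinAt)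
    hφ.injOn, integral_smul]

theorem measureReal_image (hφ : Function.Injective φ) (hs : MeasurableSet s) :
    μ.real (φ '' s) = |φ.contLinear.det| * μ.real s := by
  simpa using setIntegral_image μ hφ hs (fun _ => (1 : ℝ))

end ContinuousAffineMap

noncomputable def stingProfile (t : ℝ) : ℝ := (56 * t ^ 3 - 63 * t ^ 2 + 18 * t - 1) / 10

@[fun_prop]
lemma continuous_stingProfile : Continuous stingProfile := by
  unfold stingProfile
  fun_prop

def stdTriangle : Set (ℝ × ℝ) := convexHull ℝ {(0, 0), (1, 0), (0, 1)}

lemma convex_setOf_nonneg_nonneg_add_le_one :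
    Convex ℝ {p : ℝ × ℝ | 0 ≤ p.1 ∧ 0 ≤ p.2 ∧ p.1 + p.2 ≤ 1} := by
  rintro x ⟨hx₁, hx₂, hx⟩ y ⟨hy₁, hy₂, hy⟩ a b ha hb hab
  simp only [mem_ofPred_eq, Prod.fst_add, Prod.snd_add, Prod.smul_fst, Prod.smul_snd, smul_eq_mul]
  refine ⟨by positivity, by positivity, by nlinarith⟩

lemma mem_stdTriangle {p : ℝ × ℝ} : p ∈ stdTriangle ↔ 0 ≤ p.1 ∧ 0 ≤ p.2 ∧ p.1 + p.2 ≤ 1 := by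
  constructor
  · refine fun hp => convexHull_min ?_ convex_setOf_nonneg_nonneg_add_le_one hp
    rintro _ (rfl | rfl | rfl) <;> norm_num
  · rintro ⟨h₁, h₂, h⟩
    have hw : ∀ i ∈ Finset.univ, 0 ≤ ![1 - p.1 - p.2, p.1, p.2] i := by
      intro i _; fin_cases i <;> simp <;> linarith
    have hz : ∀ i ∈ Finset.univ, ![((0 : ℝ), (0 : ℝ)), (1, 0), (0, 1)] i ∈ stdTriangle := by
      intro i _; apply subset_convexHull; fin_cases i <;> simp
    unfold stdTriangle at hz ⊢
    convert (convex_convexHull ℝ _).sum_mem hw (by simp [Fin.sum_univ_three]; ring) hz using 1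
    ext <;> simp [Fin.sum_univ_three]

lemma isCompact_stdTriangle : IsCompact stdTriangle := (toFinite _).isCompact_convexHull ℝ

lemma measurableSet_stdTriangle : MeasurableSet stdTriangle :=
  isCompact_stdTriangle.isClosed.measurableSet

lemma Continuous.integrableOn_stdTriangle {E : Type*} [NormedAddCommGroup E] {f : ℝ × ℝ → E}
    (hf : Continuous f) : IntegrableOn f stdTriangle :=
  hf.continuousOn.integrableOn_compact isCompact_stdTriangle

lemma preimage_mk_stdTriangle {u : ℝ} (hu : u ∈ Icc 0 1) :
    Prod.mk u ⁻¹' stdTriangle = Icc 0 (1 - u) := by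
  ext v
  simp only [mem_preimage, mem_stdTriangle, mem_Icc]
  constructor
  · rintro ⟨-, hv, h⟩; exact ⟨hv, by linarith⟩
  · rintro ⟨hv, h⟩; exact ⟨hu.1, hv, by linarith⟩

lemma preimage_mk_stdTriangle_of_notMem {u : ℝ} (hu : u ∉ Icc 0 1) :
    Prod.mk u ⁻¹' stdTriangle = ∅ := by
  refine eq_empty_of_forall_notMem fun v hv => ?_
  rw [mem_preimage, mem_stdTriangle] at hv
  exact hu ⟨hv.1, by linarith [hv.2.1, hv.2.2]⟩

theorem setIntegral_stdTriangle {E : Type*} [NormedAddCommGroup E] [NormedSpace ℝ E]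
    {f : ℝ × ℝ → E} (hf : IntegrableOn f stdTriangle) :
    ∫ p in stdTriangle, f p = ∫ u in (0 : ℝ)..1, ∫ v in (0 : ℝ)..(1 - u), f (u, v) := by
  have slice (u : ℝ) : ∫ v, stdTriangle.indicator f (u, v) =
      (Icc 0 1).indicator (fun u => ∫ v in (0 : ℝ)..(1 - u), f (u, v)) u := by
    have hslice : (fun v => stdTriangle.indicator f (u, v)) =
        (Prod.mk u ⁻¹' stdTriangle).indicator (fun v => f (u, v)) :=
      funext fun v => (indicator_comp_right (Prod.mk u) (g := f)).symm
    by_cases hu : u ∈ Icc (0 : ℝ) 1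
    · rw [hslice, indicator_of_mem hu, preimage_mk_stdTriangle hu,
        integral_indicator measurableSet_Icc, integral_Icc_eq_integral_Ioc,
        intervalIntegral.integral_of_le (by linarith [hu.2])]
    · rw [hslice, indicator_of_notMem hu, preimage_mk_stdTriangle_of_notMem hu]
      simp
  rw [← integral_indicator measurableSet_stdTriangle, Measure.volume_eq_prod,
    integral_prod _ (hf.integrable_indicator measurableSet_stdTriangle)]
  simp only [slice]
  rw [integral_indicator measurableSet_Icc, integral_Icc_eq_integral_Ioc,
    intervalIntegral.integral_of_le zero_le_one]

theorem measureReal_stdTriangle : volume.real stdTriangle = 1 / 2 := by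
  have h := setIntegral_stdTriangle (continuous_const (y := (1 : ℝ))).integrableOn_stdTriangle
  simp only [integral_const, MeasurableSet.univ, measureReal_restrict_apply, univ_inter, smul_eq_mul,
    mul_one, intervalIntegral.integral_const, sub_zero] at h
  rw [h, intervalIntegral.integral_sub intervalIntegrable_const intervalIntegral.intervalIntegrable_id]
  norm_num

theorem integral_stingProfile_mul_pow_mul_one_sub_pow {i j : ℕ} (hij : i + j ≤ 3) :
    ∫ u in (0 : ℝ)..1, stingProfile u * (u ^ i * ((1 - u) ^ (j + 1) / (j + 1))) = 0 ^ j / 200 := by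
  unfold stingProfile
  have hi : i ≤ 3 := by omega
  have hj : j ≤ 3 := by omega
  -- `ring_nf` can leave an integrand `c + x`, which `simp` indexes eta-reduced as `HAdd.hAdd c`,
  -- so `integral_add` misses it; `integral_comp_add_left` catches that case.
  interval_cases i <;> interval_cases j <;> (try omega) <;> ring_nf <;>
    simp (disch := (apply Continuous.intervalIntegrable; fun_prop)) only [integral_pow, integral_id,
      intervalIntegral.integral_add, intervalIntegral.integral_sub,
      intervalIntegral.integral_mul_const, intervalIntegral.integral_const] <;>
    norm_num [intervalIntegral.integral_comp_add_left (fun x : ℝ => x)]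

theorem setIntegral_stdTriangle_stingProfile_mul_monomial {i j : ℕ} (hij : i + j ≤ 3) :
    ∫ p in stdTriangle, stingProfile p.1 * (p.1 ^ i * p.2 ^ j) = 0 ^ j / 200 := by
  rw [setIntegral_stdTriangle (by fun_prop : Continuous _).integrableOn_stdTriangle,
    ← integral_stingProfile_mul_pow_mul_one_sub_pow hij]
  simp [intervalIntegral.integral_const_mul, integral_pow]

theorem setIntegral_stdTriangle_stingProfile_mul_eval {P : MvPolynomial (Fin 2) ℝ}
    (hP : P.totalDegree ≤ 3) :
    ∫ p in stdTriangle, stingProfile p.1 * MvPolynomial.eval ![p.1, p.2] P =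
      MvPolynomial.eval ![1, 0] P / 200 := by
  have hdeg (d) (hd : d ∈ P.support) : d 0 + d 1 ≤ 3 := by
    simpa [Finsupp.sum_fintype] using (MvPolynomial.le_totalDegree hd).trans hP
  simp only [MvPolynomial.eval_eq', Fin.prod_univ_two, Finset.mul_sum, Finset.sum_div]
  rw [integral_finsetSum _ fun d _ => (by fun_prop : Continuous _).integrableOn_stdTriangle]
  refine Finset.sum_congr rfl fun d hd => ?_
  simp only [Matrix.cons_val_zero, Matrix.cons_val_one, one_pow, one_mul,
    mul_left_comm (stingProfile _) (MvPolynomial.coeff d P),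
    integral_const_mul, setIntegral_stdTriangle_stingProfile_mul_monomial (hdeg d hd), mul_div_assoc]

section triangleChart

variable {E : Type*} [NormedAddCommGroup E] [NormedSpace ℝ E] {A B V : E}

def triangleChart (A B V : E) : (ℝ × ℝ) →ᴬ[ℝ] E where
  toFun p := A + p.1 • (V - A) + p.2 • (B - A)
  linear := (LinearMap.fst ℝ ℝ ℝ).smulRight (V - A) + (LinearMap.snd ℝ ℝ ℝ).smulRight (B - A)
  map_vadd' p w := by
    simp only [vadd_eq_add, Prod.fst_add, Prod.snd_add, add_smul, LinearMap.add_apply,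
      LinearMap.coe_smulRight, LinearMap.fst_apply, LinearMap.snd_apply]
    abel
  cont := by fun_prop

lemma triangleChart_apply (p : ℝ × ℝ) :
    triangleChart A B V p = A + p.1 • (V - A) + p.2 • (B - A) := rfl

lemma image_triangleChart_stdTriangle :
    triangleChart A B V '' stdTriangle = convexHull ℝ {A, B, V} := by
  change (triangleChart A B V).toAffineMap '' stdTriangle = _
  rw [stdTriangle, AffineMap.image_convexHull]
  simp [Set.image_insert_eq, triangleChart_apply, Set.pair_comm]

lemma triangleChart_injective (h : AffineIndependent ℝ ![A, B, V]) :
    Function.Injective (triangleChart A B V) := by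
  intro p p' hpp'
  rw [affineIndependent_iff_of_fintype] at h
  -- with these weights, the combination of `A, B, V` is `triangleChart A B V p - triangleChart A B V p'`
  have hsum : ∑ i, ![(p'.1 - p.1) + (p'.2 - p.2), p.2 - p'.2, p.1 - p'.1] i = 0 := by
    simp only [Fin.sum_univ_three, Matrix.cons_val_zero, Matrix.cons_val_one, Matrix.cons_val]
    ring
  have hw := h _ hsum (by
    rw [Finset.weightedVSub_eq_linear_combination _ hsum, ← sub_eq_zero.mpr hpp']
    simp only [Fin.sum_univ_three, triangleChart_apply, Matrix.cons_val_zero, Matrix.cons_val_one,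
      Matrix.cons_val]
    module)
  have hu : p.1 - p'.1 = 0 := hw 2
  have hv : p.2 - p'.2 = 0 := hw 1
  exact Prod.ext (sub_eq_zero.mp hu) (sub_eq_zero.mp hv)

lemma AffineMap.apply_triangleChart (β : E →ᵃ[ℝ] ℝ) (p : ℝ × ℝ) :
    β (triangleChart A B V p) = β A + p.1 * (β V - β A) + p.2 * (β B - β A) := by
  have : triangleChart A B V p = (p.1 • (V -ᵥ A) + p.2 • (B -ᵥ A)) +ᵥ A := by
    rw [triangleChart_apply, vadd_eq_add, vsub_eq_sub, vsub_eq_sub]; abel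
  rw [this, β.map_vadd, map_add, map_smul, map_smul, β.linearMap_vsub, β.linearMap_vsub]
  simp only [smul_eq_mul, vsub_eq_sub, vadd_eq_add]
  ring

end triangleChart

/-- Lemma 4.1: the quadrature rule for the sting function against cubic polynomials.
`β` is the unique affine function with `β V = 1`, `β A = β B = 0`, the sting function is
`s x = e (β x)` with `e t = (56 t³ − 63 t² + 18 t − 1)/10`, and for every polynomial `q`
of total degree at most 3, `∫_K s q = (|K|/100) q(V)` where `K = convexHull {A, B, V}`. -/
theorem sting_quadrature_rule (A B V : ℝ × ℝ)
    (hindep : AffineIndependent ℝ ![A, B, V])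
    (β : (ℝ × ℝ) →ᵃ[ℝ] ℝ) (hβV : β V = 1) (hβA : β A = 0) (hβB : β B = 0)
    (s : ℝ × ℝ → ℝ)
    (hs : ∀ x, s x = (56 * (β x) ^ 3 - 63 * (β x) ^ 2 + 18 * (β x) - 1) / 10)
    (q : MvPolynomial (Fin 2) ℝ) (hq : q.totalDegree ≤ 3)
    (Q : ℝ × ℝ → ℝ) (hQ : ∀ x, Q x = MvPolynomial.eval ![x.1, x.2] q) :
    ∫ x in convexHull ℝ {A, B, V}, s x * Q x =
      (volume (convexHull ℝ {A, B, V} : Set (ℝ × ℝ))).toReal / 100 * Q V := by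
  obtain ⟨P, hPdeg, hP⟩ := q.exists_totalDegree_le_eval_add_smul_add_smul
    ![A.1, A.2] ![V.1 - A.1, V.2 - A.2] ![B.1 - A.1, B.2 - A.2]
  have hQ_chart (p : ℝ × ℝ) : Q (triangleChart A B V p) = MvPolynomial.eval ![p.1, p.2] P := by
    have hcoord : ![(triangleChart A B V p).1, (triangleChart A B V p).2] =
        ![A.1, A.2] + p.1 • ![V.1 - A.1, V.2 - A.2] + p.2 • ![B.1 - A.1, B.2 - A.2] := by
      ext i; fin_cases i <;> simp [triangleChart_apply]
    rw [hQ, hcoord, hP]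
  have hs_chart (p : ℝ × ℝ) : s (triangleChart A B V p) = stingProfile p.1 := by
    simp [hs, stingProfile, β.apply_triangleChart, hβA, hβB, hβV]
  have hQV : Q V = MvPolynomial.eval ![1, 0] P := by
    simpa [triangleChart_apply] using hQ_chart (1, 0)
  have hinj := triangleChart_injective hindep
  rw [← image_triangleChart_stdTriangle, ← measureReal_def,
    ContinuousAffineMap.measureReal_image volume hinj measurableSet_stdTriangle,
    ContinuousAffineMap.setIntegral_image volume hinj measurableSet_stdTriangle]
  simp only [hs_chart, hQ_chart, smul_eq_mul, setIntegral_stdTriangle_stingProfile_mul_eval (hPdeg.trans hq),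
    measureReal_stdTriangle, hQV]
  ring
end

section
/- Let K̂ = {(x, y) ∈ ℝ² : x ≥ 0, y ≥ 0, x + y ≤ 1} and set a = (3 − √6)/6 and b = 1 − a. For every polynomial p : ℝ² → ℝ of total degree at most 6, ∫_{K̂} p(x, y) dx dy = (1/2)·[ −(5/252)(p(0,0) + p(1,0) + p(0,1)) + (3/70)(p(0,a) + p(0,b) + p(a,0) + p(b,0) + p(a,b) + p(b,a)) + (17/315)(p(0,1/2) + p(1/2,0) + p(1/2,1/2)) + (128/315)(p(1/4,1/4) + p(1/4,1/2) + p(1/2,1/4)) − (81/140)·p(1/3,1/3) ]. -/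
/-!
Both sides are linear in `p`, so it suffices to treat the monomials `x ^ i * y ^ j` with
`i + j ≤ 6`. Integrating first in `y` and then in `x` reduces `∫_K̂ x ^ i * y ^ j` to a beta
integral, whose value is `i! j! / (i + j + 2)!`; the rule reproduces these 28 values exactly,
as a computation in `ℚ(√6)` shows.
-/

open MeasureTheory Set
open scoped Nat

namespace MvPolynomial

variable {R σ M : Type*} [CommSemiring R] [AddCommMonoid M] [Module R M]

theorem linearMap_eq_of_eq_on_monomials_of_totalDegree_le {L₁ L₂ : MvPolynomial σ R →ₗ[R] M}
    {n : ℕ} (h : ∀ d : σ →₀ ℕ, d.degree ≤ n → L₁ (monomial d 1) = L₂ (monomial d 1))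
    {p : MvPolynomial σ R} (hp : p.totalDegree ≤ n) : L₁ p = L₂ p := by
  rw [p.as_sum, map_sum, map_sum]
  refine Finset.sum_congr rfl fun d hd => ?_
  have hmono : monomial d (coeff d p) = coeff d p • monomial d 1 := by
    rw [smul_monomial, smul_eq_mul, mul_one]
  rw [hmono, map_smul, map_smul, h d ((le_totalDegree hd).trans hp)]

theorem eval_monomial_one_fin_two (d : Fin 2 →₀ ℕ) (x y : R) :
    eval ![x, y] (monomial d 1) = x ^ d 0 * y ^ d 1 := by
  simp [eval_monomial, Finsupp.prod_fintype, Fin.prod_univ_two]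

end MvPolynomial

theorem integral_pow_mul_one_sub_pow (i j : ℕ) :
    ∫ x in (0 : ℝ)..1, x ^ i * (1 - x) ^ j = (i ! * j ! : ℝ) / (i + j + 1)! := by
  induction j generalizing i with
  | zero =>
    simp [integral_pow, Nat.factorial_succ, field]
  | succ j ih =>
    -- x ^ (i+1) (1-x) ^ (j+1) vanishes at both ends, so its derivative integrates to zero.
    have hderiv : ∀ x ∈ uIcc (0 : ℝ) 1, HasDerivAt (fun x : ℝ => x ^ (i + 1) * (1 - x) ^ (j + 1))
        ((i + 1) * (x ^ i * (1 - x) ^ (j + 1)) - (j + 1) * (x ^ (i + 1) * (1 - x) ^ j)) x := by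
      intro x _
      refine ((hasDerivAt_pow (i + 1) x).fun_mul
        (((hasDerivAt_id' x).const_sub 1).fun_pow (j + 1))).congr_deriv ?_
      simp only [Nat.add_sub_cancel]
      push_cast
      ring
    have hFTC := intervalIntegral.integral_eq_sub_of_hasDerivAt hderiv
      (Continuous.intervalIntegrable (by fun_prop) _ _)
    rw [intervalIntegral.integral_sub (Continuous.intervalIntegrable (by fun_prop) _ _)
        (Continuous.intervalIntegrable (by fun_prop) _ _),
      intervalIntegral.integral_const_mul, intervalIntegral.integral_const_mul, ih (i + 1),
      show i + 1 + j + 1 = i + (j + 1) + 1 by ring, Nat.factorial_succ i] at hFTC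
    rw [Nat.factorial_succ j]
    push_cast at hFTC ⊢
    apply mul_left_cancel₀ (show (i : ℝ) + 1 ≠ 0 by positivity)
    linear_combination hFTC

def refTriangle : Set (ℝ × ℝ) := {z | 0 ≤ z.1 ∧ 0 ≤ z.2 ∧ z.1 + z.2 ≤ 1}

theorem isCompact_refTriangle : IsCompact refTriangle := by
  have hclosed : IsClosed refTriangle :=
    (isClosed_le continuous_const continuous_fst).inter ((isClosed_le continuous_const
      continuous_snd).inter (isClosed_le (continuous_fst.add continuous_snd) continuous_const))
  refine (isCompact_Icc (a := ((0 : ℝ), (0 : ℝ))) (b := (1, 1))).of_isClosed_subset hclosed ?_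
  rintro ⟨x, y⟩ ⟨hx, hy, hxy⟩
  exact ⟨⟨hx, hy⟩, ⟨by dsimp at *; linarith, by dsimp at *; linarith⟩⟩

theorem Continuous.integrableOn_refTriangle {f : ℝ × ℝ → ℝ} (hf : Continuous f) :
    IntegrableOn f refTriangle :=
  hf.continuousOn.integrableOn_compact isCompact_refTriangle

theorem mk_mem_refTriangle_iff {x y : ℝ} (hx : 0 ≤ x) :
    (x, y) ∈ refTriangle ↔ y ∈ Icc 0 (1 - x) := by
  change 0 ≤ x ∧ 0 ≤ y ∧ x + y ≤ 1 ↔ 0 ≤ y ∧ y ≤ 1 - x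
  constructor
  · rintro ⟨-, hy, hxy⟩; exact ⟨hy, by linarith⟩
  · rintro ⟨hy, hxy⟩; exact ⟨hx, hy, by linarith⟩

theorem integral_refTriangle {f : ℝ × ℝ → ℝ} (hf : IntegrableOn f refTriangle) :
    ∫ z in refTriangle, f z = ∫ x in (0 : ℝ)..1, ∫ y in (0 : ℝ)..(1 - x), f (x, y) := by
  have hT : MeasurableSet refTriangle := isCompact_refTriangle.isClosed.measurableSet
  have hslice : ∀ x, ∫ y, refTriangle.indicator f (x, y) =
      (Icc 0 1).indicator (fun x => ∫ y in (0 : ℝ)..(1 - x), f (x, y)) x := by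
    intro x
    by_cases hx : x ∈ Icc (0 : ℝ) 1
    · rw [indicator_of_mem hx, intervalIntegral.integral_of_le (by linarith [hx.2]),
        ← integral_Icc_eq_integral_Ioc, ← integral_indicator measurableSet_Icc]
      congr 1 with y
      by_cases hy : y ∈ Icc 0 (1 - x)
      · rw [indicator_of_mem hy, indicator_of_mem ((mk_mem_refTriangle_iff hx.1).2 hy)]
      · rw [indicator_of_notMem hy, indicator_of_notMem (mt (mk_mem_refTriangle_iff hx.1).1 hy)]
    · have hnot : ∀ y, (x, y) ∉ refTriangle := fun y h => hx ⟨h.1, by linarith [h.2.1, h.2.2]⟩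
      simp [indicator_of_notMem hx, indicator_of_notMem (hnot _)]
  rw [← integral_indicator hT, Measure.volume_eq_prod,
    integral_prod _ (by simpa [Measure.volume_eq_prod] using hf.integrable_indicator hT)]
  simp_rw [hslice]
  rw [integral_indicator measurableSet_Icc, integral_Icc_eq_integral_Ioc,
    ← intervalIntegral.integral_of_le zero_le_one]

theorem integral_refTriangle_pow_mul_pow (i j : ℕ) :
    ∫ z in refTriangle, z.1 ^ i * z.2 ^ j = (i ! * j ! : ℝ) / (i + j + 2)! := by
  rw [integral_refTriangle (Continuous.integrableOn_refTriangle (by fun_prop))]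
  have hinner : ∀ x : ℝ, ∫ y in (0 : ℝ)..(1 - x), x ^ i * y ^ j =
      (1 / (j + 1 : ℝ)) * (x ^ i * (1 - x) ^ (j + 1)) := by
    intro x
    rw [intervalIntegral.integral_const_mul, integral_pow, zero_pow (Nat.succ_ne_zero j)]
    ring
  simp_rw [hinner]
  rw [intervalIntegral.integral_const_mul, integral_pow_mul_one_sub_pow,
    show i + (j + 1) + 1 = i + j + 2 by ring, Nat.factorial_succ j]
  push_cast
  field_simp

theorem integrableOn_refTriangle_eval (p : MvPolynomial (Fin 2) ℝ) :
    IntegrableOn (fun z : ℝ × ℝ => MvPolynomial.eval ![z.1, z.2] p) refTriangle :=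
  Continuous.integrableOn_refTriangle <| (MvPolynomial.continuous_eval p).comp
    (show Continuous fun z : ℝ × ℝ => ![z.1, z.2] by fun_prop)

open MvPolynomial in
noncomputable def refTriangleIntegralₗ : MvPolynomial (Fin 2) ℝ →ₗ[ℝ] ℝ where
  toFun p := ∫ z in refTriangle, eval ![z.1, z.2] p
  map_add' p q := by
    simp only [eval_add]
    exact integral_add (integrableOn_refTriangle_eval p) (integrableOn_refTriangle_eval q)
  map_smul' c p := by simp only [smul_eval, integral_const_mul, RingHom.id_apply, smul_eq_mul]

noncomputable def lynessRule (f : ℝ → ℝ → ℝ) : ℝ :=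
  let a := (3 - √6) / 6
  let b := 1 - a
  (1 / 2) *
    (-(5 / 252) * (f 0 0 + f 1 0 + f 0 1) +
      (3 / 70) * (f 0 a + f 0 b + f a 0 + f b 0 + f a b + f b a) +
      (17 / 315) * (f 0 (1/2) + f (1/2) 0 + f (1/2) (1/2)) +
      (128 / 315) * (f (1/4) (1/4) + f (1/4) (1/2) + f (1/2) (1/4)) -
      (81 / 140) * f (1/3) (1/3))

theorem lynessRule_pow_mul_pow {i j : ℕ} (hij : i + j ≤ 6) :
    lynessRule (fun x y => x ^ i * y ^ j) = (i ! * j ! : ℝ) / (i + j + 2)! := by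
  have h2 : √6 ^ 2 = 6 := Real.sq_sqrt (by norm_num)
  have h3 : √6 ^ 3 = 6 * √6 := by rw [pow_succ, h2]
  have h4 : √6 ^ 4 = 36 := by rw [pow_succ, h3]; nlinarith
  have h5 : √6 ^ 5 = 36 * √6 := by rw [pow_succ, h4]
  have h6 : √6 ^ 6 = 216 := by rw [pow_succ, h5]; nlinarith
  simp only [lynessRule]
  have hi : i ≤ 6 := by omega
  have hj : j ≤ 6 := by omega
  -- after `ring_nf` each case is linear in the powers `√6 ^ k`, which `h2`–`h6` make rational
  interval_cases i <;> interval_cases j <;> norm_num [Nat.factorial] <;> ring_nf <;> linarith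

open MvPolynomial in
noncomputable def lynessRuleₗ : MvPolynomial (Fin 2) ℝ →ₗ[ℝ] ℝ where
  toFun p := lynessRule fun x y => eval ![x, y] p
  map_add' p q := by simp only [lynessRule, eval_add]; ring
  map_smul' c p := by simp only [lynessRule, smul_eval, RingHom.id_apply, smul_eq_mul]; ring

/-- The 16-point Lyness quadrature rule (equations (6.1)–(6.2)) on the reference
triangle with vertices `(0,0)`, `(1,0)`, `(0,1)`: it integrates exactly every bivariate
polynomial of total degree at most 6. -/
theorem lyness_sixteen_point_rule (a b : ℝ)
    (ha : a = (3 - Real.sqrt 6) / 6) (hb : b = 1 - a)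
    (p : MvPolynomial (Fin 2) ℝ) (hp : p.totalDegree ≤ 6)
    (P : ℝ → ℝ → ℝ) (hP : ∀ x y, P x y = MvPolynomial.eval ![x, y] p) :
    ∫ z in {z : ℝ × ℝ | 0 ≤ z.1 ∧ 0 ≤ z.2 ∧ z.1 + z.2 ≤ 1}, P z.1 z.2 =
      (1 / 2) *
        (-(5 / 252) * (P 0 0 + P 1 0 + P 0 1) +
          (3 / 70) * (P 0 a + P 0 b + P a 0 + P b 0 + P a b + P b a) +
          (17 / 315) * (P 0 (1/2) + P (1/2) 0 + P (1/2) (1/2)) +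
          (128 / 315) * (P (1/4) (1/4) + P (1/4) (1/2) + P (1/2) (1/4)) -
          (81 / 140) * P (1/3) (1/3)) := by
  obtain rfl : P = fun x y => MvPolynomial.eval ![x, y] p := funext₂ hP
  subst hb ha
  refine MvPolynomial.linearMap_eq_of_eq_on_monomials_of_totalDegree_le
    (L₁ := refTriangleIntegralₗ) (L₂ := lynessRuleₗ) (fun d hd => ?_) hp
  rw [Finsupp.degree_eq_sum, Fin.sum_univ_two] at hd
  simp only [refTriangleIntegralₗ, lynessRuleₗ, LinearMap.coe_mk, AddHom.coe_mk,
    MvPolynomial.eval_monomial_one_fin_two]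
  rw [integral_refTriangle_pow_mul_pow, lynessRule_pow_mul_pow hd]
end

section
/- Let V, V⁺, V⁻ ∈ ℝ² be affinely independent, G = (V + V⁺ + V⁻)/3 the centroid, i = (G − V)/‖G − V‖, and μ(x) = i⊥ · (x − G) where i⊥ is the 90-degree counterclockwise rotation of i. Assume μ(V⁺) > 0 and set d = μ(V⁺) (so that μ(V⁻) = −d). Define g⁺(x) = ι⁺(μ(x)/d) and g⁻(x) = ι⁻(μ(x)/d) with ι⁺(t) = 8t³ + 3t² and ι⁻(t) = 8t³ − 3t². Let G₀ = ½V + ¼V⁺ + ¼V⁻, G⁺ = ¼V + ½V⁺ + ¼V⁻, G⁻ = ¼V + ¼V⁺ + ½V⁻. Then: ∇g⁺ vanishes at G, G₀ and G⁻, and ∇g⁺(G⁺) = (3/d)·i⊥; while ∇g⁻ vanishes at G, G₀ and G⁺, and ∇g⁻(G⁻) = (3/d)·i⊥. -/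
/-!
The function `μ` is affine with linear part `w ↦ i⊥ ⬝ w`, and it vanishes at `V` and `G`
because `i` is parallel to `G - V`. Affinity then places the Lyness points on the levels
`μ(G₀) = 0`, `μ(G⁺) = d/4`, `μ(G⁻) = -d/4`. By the chain rule
`∇g^± = ι^±'(μ/d)/d · i⊥`, and `ι^±'(t) = 24t² ± 6t` vanishes at `t = 0` and `t = ∓1/4`
and equals `3` at `t = ±1/4`.
-/

/-- The linear form `w ↦ i⊥ ⬝ w`. -/
def perpForm (i : ℝ × ℝ) : ℝ × ℝ →L[ℝ] ℝ :=
  (-i.2) • ContinuousLinearMap.fst ℝ ℝ ℝ + i.1 • ContinuousLinearMap.snd ℝ ℝ ℝ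

@[simp]
lemma perpForm_apply (i w : ℝ × ℝ) : perpForm i w = -i.2 * w.1 + i.1 * w.2 := by
  simp [perpForm]

lemma perpForm_smul_apply_self (s : ℝ) (v : ℝ × ℝ) : perpForm (s • v) v = 0 := by
  simp only [perpForm_apply, Prod.smul_fst, Prod.smul_snd, smul_eq_mul]
  ring

section LynessLevels

variable {E F : Type*} [AddCommGroup E] [Module ℝ E] [FunLike F E ℝ] [LinearMapClass F ℝ E ℝ]
  (ℓ : F) {V Vp Vm G : E}

lemma map_sub_centroid_lyness_zero (hG : G = (1/3 : ℝ) • (V + Vp + Vm)) (hV : ℓ (V - G) = 0) :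
    ℓ ((1/2 : ℝ) • V + (1/4 : ℝ) • Vp + (1/4 : ℝ) • Vm - G) = 0 := by
  subst hG
  simp only [map_sub, map_add, map_smul, smul_eq_mul] at hV ⊢
  linarith

lemma map_sub_centroid_lyness_plus (hG : G = (1/3 : ℝ) • (V + Vp + Vm)) (hV : ℓ (V - G) = 0) :
    ℓ ((1/4 : ℝ) • V + (1/2 : ℝ) • Vp + (1/4 : ℝ) • Vm - G) = ℓ (Vp - G) / 4 := by
  subst hG
  simp only [map_sub, map_add, map_smul, smul_eq_mul] at hV ⊢
  linarith

lemma map_sub_centroid_lyness_minus (hG : G = (1/3 : ℝ) • (V + Vp + Vm)) (hV : ℓ (V - G) = 0) :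
    ℓ ((1/4 : ℝ) • V + (1/4 : ℝ) • Vp + (1/2 : ℝ) • Vm - G) = -(ℓ (Vp - G) / 4) := by
  subst hG
  simp only [map_sub, map_add, map_smul, smul_eq_mul] at hV ⊢
  linarith

end LynessLevels

lemma hasDerivAt_cubic_div (q d t : ℝ) :
    HasDerivAt (fun t : ℝ => 8 * (t / d) ^ 3 + q * (t / d) ^ 2)
      ((24 * (t / d) ^ 2 + 2 * q * (t / d)) / d) t := by
  have hdiv : HasDerivAt (fun t : ℝ => t / d) (1 / d) t := (hasDerivAt_id t).div_const d
  refine (((hdiv.pow 3).const_mul 8).add ((hdiv.pow 2).const_mul q)).congr_deriv ?_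
  norm_num
  ring

lemma hasFDerivAt_cubic_div_comp {E : Type*} [NormedAddCommGroup E] [NormedSpace ℝ E]
    (ℓ : E →L[ℝ] ℝ) {G : E} {μ g : E → ℝ} (hμ : ∀ x, μ x = ℓ (x - G)) {q d : ℝ}
    (hg : ∀ x, g x = 8 * (μ x / d) ^ 3 + q * (μ x / d) ^ 2) (x : E) :
    HasFDerivAt g (((24 * (μ x / d) ^ 2 + 2 * q * (μ x / d)) / d) • ℓ) x := by
  have hμ' : HasFDerivAt μ ℓ x := by
    rw [funext hμ]
    simpa only [map_sub] using ℓ.hasFDerivAt.sub_const (ℓ G)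
  rw [funext hg]
  exact (hasDerivAt_cubic_div q d (μ x)).comp_hasFDerivAt x hμ'

theorem gradients_of_interior_basis_cubics_general (V Vp Vm : ℝ × ℝ)
    (G : ℝ × ℝ) (hG : G = (1/3 : ℝ) • (V + Vp + Vm))
    (i : ℝ × ℝ)
    (hi : i = (1 / Real.sqrt ((G.1 - V.1) ^ 2 + (G.2 - V.2) ^ 2)) • (G - V))
    (μ : ℝ × ℝ → ℝ) (hμ : ∀ x, μ x = (-i.2) * (x.1 - G.1) + i.1 * (x.2 - G.2))
    (d : ℝ) (hd : d = μ Vp) (hdpos : 0 < d)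
    (gp gm : ℝ × ℝ → ℝ)
    (hgp : ∀ x, gp x = 8 * (μ x / d) ^ 3 + 3 * (μ x / d) ^ 2)
    (hgm : ∀ x, gm x = 8 * (μ x / d) ^ 3 - 3 * (μ x / d) ^ 2)
    (G₀ Gp Gm : ℝ × ℝ)
    (hG₀ : G₀ = (1/2 : ℝ) • V + (1/4 : ℝ) • Vp + (1/4 : ℝ) • Vm)
    (hGp : Gp = (1/4 : ℝ) • V + (1/2 : ℝ) • Vp + (1/4 : ℝ) • Vm)
    (hGm : Gm = (1/4 : ℝ) • V + (1/4 : ℝ) • Vp + (1/2 : ℝ) • Vm) :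
    fderiv ℝ gp G = 0 ∧ fderiv ℝ gp G₀ = 0 ∧ fderiv ℝ gp Gm = 0 ∧
    (∀ w : ℝ × ℝ, fderiv ℝ gp Gp w = (3 / d) * ((-i.2) * w.1 + i.1 * w.2)) ∧
    fderiv ℝ gm G = 0 ∧ fderiv ℝ gm G₀ = 0 ∧ fderiv ℝ gm Gp = 0 ∧
    (∀ w : ℝ × ℝ, fderiv ℝ gm Gm w = (3 / d) * ((-i.2) * w.1 + i.1 * w.2)) := by
  have hμℓ : ∀ x, μ x = perpForm i (x - G) := fun x => by simp [hμ]
  have hV : perpForm i (V - G) = 0 := by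
    rw [← neg_sub, map_neg, hi, perpForm_smul_apply_self, neg_zero]
  have hd' : d = perpForm i (Vp - G) := by rw [hd, hμℓ]
  have hG_level : μ G / d = 0 := by simp [hμℓ]
  have hG₀_level : μ G₀ / d = 0 := by
    rw [hμℓ, hG₀, map_sub_centroid_lyness_zero _ hG hV, zero_div]
  have hGp_level : μ Gp / d = 1 / 4 := by
    rw [hμℓ, hGp, map_sub_centroid_lyness_plus _ hG hV, ← hd']
    field_simp
  have hGm_level : μ Gm / d = -(1 / 4) := by
    rw [hμℓ, hGm, map_sub_centroid_lyness_minus _ hG hV, ← hd']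
    field_simp
  have grad_p x := (hasFDerivAt_cubic_div_comp _ hμℓ hgp x).fderiv
  have hgm' : ∀ x, gm x = 8 * (μ x / d) ^ 3 + -3 * (μ x / d) ^ 2 := fun x => by rw [hgm]; ring
  have grad_m x := (hasFDerivAt_cubic_div_comp _ hμℓ hgm' x).fderiv
  refine ⟨?_, ?_, ?_, fun w => ?_, ?_, ?_, ?_, fun w => ?_⟩ <;>
    simp only [grad_p, grad_m, hG_level, hG₀_level, hGp_level, hGm_level,
      smul_apply, perpForm_apply, smul_eq_mul] <;>
    norm_num

/-- Lemma 5.1: the gradients of the two cubics `g⁺ = ι⁺(μ/d)` and `g⁻ = ι⁻(μ/d)` vanish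
at three of the four interior 16-Lyness quadrature points of the triangle `V V⁺ V⁻`,
and equal `(3/d) i⊥` at the remaining one.  Here `i = (G − V)/‖G − V‖` (Euclidean
norm), `i⊥ = (−i.2, i.1)`, `μ x = i⊥ ⬝ (x − G)`, `d = μ(V⁺) > 0`. -/
theorem gradients_of_interior_basis_cubics (V Vp Vm : ℝ × ℝ)
    (hindep : AffineIndependent ℝ ![V, Vp, Vm])
    (G : ℝ × ℝ) (hG : G = (1/3 : ℝ) • (V + Vp + Vm))
    (i : ℝ × ℝ)
    (hi : i = (1 / Real.sqrt ((G.1 - V.1) ^ 2 + (G.2 - V.2) ^ 2)) • (G - V))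
    (μ : ℝ × ℝ → ℝ) (hμ : ∀ x, μ x = (-i.2) * (x.1 - G.1) + i.1 * (x.2 - G.2))
    (d : ℝ) (hd : d = μ Vp) (hdpos : 0 < d)
    (gp gm : ℝ × ℝ → ℝ)
    (hgp : ∀ x, gp x = 8 * (μ x / d) ^ 3 + 3 * (μ x / d) ^ 2)
    (hgm : ∀ x, gm x = 8 * (μ x / d) ^ 3 - 3 * (μ x / d) ^ 2)
    (G₀ Gp Gm : ℝ × ℝ)
    (hG₀ : G₀ = (1/2 : ℝ) • V + (1/4 : ℝ) • Vp + (1/4 : ℝ) • Vm)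
    (hGp : Gp = (1/4 : ℝ) • V + (1/2 : ℝ) • Vp + (1/4 : ℝ) • Vm)
    (hGm : Gm = (1/4 : ℝ) • V + (1/4 : ℝ) • Vp + (1/2 : ℝ) • Vm) :
    fderiv ℝ gp G = 0 ∧ fderiv ℝ gp G₀ = 0 ∧ fderiv ℝ gp Gm = 0 ∧
    (∀ w : ℝ × ℝ, fderiv ℝ gp Gp w = (3 / d) * ((-i.2) * w.1 + i.1 * w.2)) ∧
    fderiv ℝ gm G = 0 ∧ fderiv ℝ gm G₀ = 0 ∧ fderiv ℝ gm Gp = 0 ∧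
    (∀ w : ℝ × ℝ, fderiv ℝ gm Gm w = (3 / d) * ((-i.2) * w.1 + i.1 * w.2)) :=
  gradients_of_interior_basis_cubics_general V Vp Vm G hG i hi μ hμ d hd hdpos gp gm hgp hgm G₀ Gp
    Gm hG₀ hGp hGm
end

section
/- Let V₁, V₂, V₃ ∈ ℝ² be affinely independent, K = convexHull{V₁, V₂, V₃}, and for i ∈ {1,2,3} let G_i = ½V_i + ¼V_j + ¼V_k where {j, k} = {1,2,3}∖{i}. Then there exists exactly one polynomial v : ℝ² → ℝ of total degree at most 4 that vanishes identically on all three edges [V₁,V₂], [V₂,V₃], [V₃,V₁] of K and satisfies v(G₁) = 0, v(G₂) = 0, v(G₃) = 1. -/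
/-!
In barycentric coordinates `λ₁, λ₂, λ₃` of the triangle the bubble is
`128 λ₁ λ₂ λ₃ (λ₃ - 1/4)`: the cubic factor kills the edges, `λ₃ = 1/4` at `G₁` and `G₂`, and
`(λ₁, λ₂, λ₃) = (1/4, 1/4, 1/2)` at `G₃`.

For uniqueness, pull the difference of two solutions back along the affine chart
`(s, t) ↦ V₁ + s (V₂ - V₁) + t (V₃ - V₁)` of the reference triangle `(0,0), (1,0), (0,1)`.
This preserves the degree bound and all vanishing conditions, and on the reference triangle
five points on each edge together with the three Lyness points force all fifteen coefficients
of a polynomial of degree at most four to vanish. Since the chart is onto, the difference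
vanishes everywhere.
-/

open MvPolynomial

namespace MvPolynomial

theorem totalDegree_aeval_le {σ τ R : Type*} [CommSemiring R]
    {f : σ → MvPolynomial τ R} {m : ℕ} (hf : ∀ i, (f i).totalDegree ≤ m)
    (p : MvPolynomial σ R) : (aeval f p).totalDegree ≤ m * p.totalDegree := by
  conv_lhs => rw [p.as_sum, map_sum]
  refine (totalDegree_finsetSum _ _).trans (Finset.sup_le fun d hd => ?_)
  rw [aeval_monomial, algebraMap_eq]
  refine (totalDegree_mul _ _).trans ?_
  rw [totalDegree_C, zero_add, Finsupp.prod]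
  calc (∏ i ∈ d.support, f i ^ d i).totalDegree
      ≤ ∑ i ∈ d.support, (f i ^ d i).totalDegree := totalDegree_finsetProd _ _
    _ ≤ ∑ i ∈ d.support, m * d i := Finset.sum_le_sum fun i _ =>
        (totalDegree_pow _ _).trans (by rw [mul_comm]; gcongr; exact hf i)
    _ = m * d.degree := by rw [← Finset.mul_sum, Finsupp.degree_apply]
    _ ≤ m * p.totalDegree := by gcongr; exact le_totalDegree hd

theorem eval_aeval {σ τ R : Type*} [CommSemiring R] (z : τ → R)
    (f : σ → MvPolynomial τ R) (p : MvPolynomial σ R) :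
    eval z (aeval f p) = eval (fun i => eval z (f i)) p := by
  rw [aeval_eq_bind₁]
  exact eval₂Hom_bind₁ _ _ _ _

theorem eval_eq_sum_range_of_totalDegree_le {R : Type*} [CommSemiring R]
    {p : MvPolynomial (Fin 2) R} {n : ℕ} (hp : p.totalDegree ≤ n) (z : Fin 2 → R) :
    eval z p = ∑ i ∈ Finset.range (n + 1), ∑ j ∈ Finset.range (n + 1 - i),
      coeff (Finsupp.single 0 i + Finsupp.single 1 j) p * z 0 ^ i * z 1 ^ j := by
  have hd (d : Fin 2 →₀ ℕ) : Finsupp.single 0 (d 0) + Finsupp.single 1 (d 1) = d := by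
    ext k; fin_cases k <;> simp
  rw [eval_eq', Finset.sum_sigma']
  symm
  refine Finset.sum_bij_ne_zero (fun x _ _ => Finsupp.single 0 x.1 + Finsupp.single 1 x.2)
    (fun x _ hx => mem_support_iff.mpr (left_ne_zero_of_mul (left_ne_zero_of_mul hx)))
    ?_ ?_ ?_
  · rintro ⟨i, j⟩ - - ⟨i', j'⟩ - - h
    obtain rfl : i = i' := by simpa using DFunLike.congr_fun h 0
    obtain rfl : j = j' := by simpa using DFunLike.congr_fun h 1
    rfl
  · intro d hdp hne
    have hdeg : d 0 + d 1 ≤ n := by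
      have := (le_totalDegree hdp).trans hp
      rwa [Finsupp.sum_fintype _ _ (by simp), Fin.sum_univ_two] at this
    refine ⟨⟨d 0, d 1⟩, by simp; omega, ?_, hd d⟩
    dsimp only
    rwa [hd d, mul_assoc, ← Fin.prod_univ_two (fun i => z i ^ d i)]
  · rintro ⟨i, j⟩ - -
    simp [Fin.prod_univ_two, mul_assoc]

end MvPolynomial

noncomputable def affinePoly (a b c : ℝ) : MvPolynomial (Fin 2) ℝ := C a * X 0 + C b * X 1 + C c

theorem totalDegree_affinePoly_le (a b c : ℝ) : (affinePoly a b c).totalDegree ≤ 1 := by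
  unfold affinePoly
  grw [totalDegree_add, totalDegree_add, totalDegree_mul, totalDegree_mul]
  simp

theorem eval_affinePoly (a b c : ℝ) (z : Fin 2 → ℝ) :
    eval z (affinePoly a b c) = a * z 0 + b * z 1 + c := by
  simp [affinePoly]

noncomputable def AffineMap.toMvPolynomial (f : ℝ × ℝ →ᵃ[ℝ] ℝ) : MvPolynomial (Fin 2) ℝ :=
  affinePoly (f.linear (1, 0)) (f.linear (0, 1)) (f 0)

theorem AffineMap.totalDegree_toMvPolynomial_le (f : ℝ × ℝ →ᵃ[ℝ] ℝ) :
    f.toMvPolynomial.totalDegree ≤ 1 :=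
  totalDegree_affinePoly_le _ _ _

theorem AffineMap.eval_toMvPolynomial (f : ℝ × ℝ →ᵃ[ℝ] ℝ) (x : ℝ × ℝ) :
    eval ![x.1, x.2] f.toMvPolynomial = f x := by
  have hx : x = x.1 • ((1 : ℝ), (0 : ℝ)) + x.2 • ((0 : ℝ), (1 : ℝ)) := by ext <;> simp
  conv_rhs => rw [f.decomp, Pi.add_apply, hx, map_add, map_smul, map_smul]
  simp [toMvPolynomial, eval_affinePoly, mul_comm]

noncomputable def affineChart (P₀ P₁ P₂ : ℝ × ℝ) : Fin 2 → MvPolynomial (Fin 2) ℝ :=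
  ![affinePoly (P₁.1 - P₀.1) (P₂.1 - P₀.1) P₀.1, affinePoly (P₁.2 - P₀.2) (P₂.2 - P₀.2) P₀.2]

theorem totalDegree_aeval_affineChart_le (P₀ P₁ P₂ : ℝ × ℝ) (p : MvPolynomial (Fin 2) ℝ) :
    (aeval (affineChart P₀ P₁ P₂) p).totalDegree ≤ p.totalDegree := by
  refine (totalDegree_aeval_le (m := 1) (fun i => ?_) p).trans (one_mul _).le
  fin_cases i <;> exact totalDegree_affinePoly_le _ _ _

theorem eval_aeval_affineChart {P₀ P₁ P₂ x : ℝ × ℝ} {s t : ℝ}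
    (hx : P₀ + s • (P₁ - P₀) + t • (P₂ - P₀) = x) (p : MvPolynomial (Fin 2) ℝ) :
    eval ![s, t] (aeval (affineChart P₀ P₁ P₂) p) = eval ![x.1, x.2] p := by
  rw [eval_aeval]
  refine congrArg (fun z => eval z p) (funext fun i => ?_)
  fin_cases i <;> simp [← hx, affineChart, eval_affinePoly] <;> ring

theorem AffineBasis.coord_eq_zero_of_mem_segment {ι V : Type*} [AddCommGroup V] [Module ℝ V]
    (b : AffineBasis ι ℝ V) {i j k : ι} (hi : k ≠ i) (hj : k ≠ j) {x : V}
    (hx : x ∈ segment ℝ (b i) (b j)) : b.coord k x = 0 := by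
  rw [segment_eq_image_lineMap] at hx
  obtain ⟨t, -, rfl⟩ := hx
  rw [AffineMap.apply_lineMap, b.coord_apply_ne hi, b.coord_apply_ne hj,
    AffineMap.lineMap_same_apply]

theorem AffineBasis.coord_smul_add_smul_add_smul {k V : Type*} [Ring k] [AddCommGroup V]
    [Module k V] (b : AffineBasis (Fin 3) k V) {w₀ w₁ w₂ : k} (hw : w₀ + w₁ + w₂ = 1)
    (i : Fin 3) : b.coord i (w₀ • b 0 + w₁ • b 1 + w₂ • b 2) = ![w₀, w₁, w₂] i := by
  have hw' : ∑ j, ![w₀, w₁, w₂] j = 1 := by simpa [Fin.sum_univ_three] using hw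
  have h := b.coord_apply_combination_of_mem (Finset.mem_univ i) hw'
  rwa [Finset.affineCombination_eq_linear_combination _ _ _ hw', Fin.sum_univ_three] at h

theorem eq_zero_of_vanishing_on_standard_triangle {p : MvPolynomial (Fin 2) ℝ}
    (hp : p.totalDegree ≤ 4)
    (h₀₁ : ∀ t ∈ Set.Icc (0 : ℝ) 1, eval ![t, 0] p = 0)
    (h₁₂ : ∀ t ∈ Set.Icc (0 : ℝ) 1, eval ![1 - t, t] p = 0)
    (h₂₀ : ∀ t ∈ Set.Icc (0 : ℝ) 1, eval ![0, t] p = 0)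
    (hG₁ : eval ![1/4, 1/4] p = 0) (hG₂ : eval ![1/2, 1/4] p = 0)
    (hG₃ : eval ![1/4, 1/2] p = 0) : p = 0 := by
  obtain ⟨c, hc⟩ : ∃ c : ℕ → ℕ → ℝ,
      ∀ i j, coeff (Finsupp.single 0 i + Finsupp.single 1 j) p = c i j := ⟨_, fun _ _ => rfl⟩
  have hp' := eval_eq_sum_range_of_totalDegree_le hp
  simp only [hc] at hp'
  have hS : ({0, 1/4, 1/2, 3/4, 1} : Set ℝ) ⊆ Set.Icc 0 1 := by
    simp only [Set.insert_subset_iff, Set.singleton_subset_iff]; norm_num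
  have h₀₁' := fun t ht => h₀₁ t (hS ht)
  have h₁₂' := fun t ht => h₁₂ t (hS ht)
  have h₂₀' := fun t ht => h₂₀ t (hS ht)
  simp only [Set.mem_insert_iff, Set.mem_singleton_iff, forall_eq_or_imp, forall_eq]
    at h₀₁' h₁₂' h₂₀'
  obtain ⟨hb₀, hb₁, hb₂, hb₃, hb₄⟩ := h₀₁'
  obtain ⟨-, hh₁, hh₂, hh₃, -⟩ := h₁₂'
  obtain ⟨-, hl₁, hl₂, hl₃, hl₄⟩ := h₂₀'
  simp only [hp', Finset.sum_range_succ, Finset.sum_range_zero, Matrix.cons_val_zero,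
    Matrix.cons_val_one] at hb₀ hb₁ hb₂ hb₃ hb₄ hh₁ hh₂ hh₃ hl₁ hl₂ hl₃ hl₄ hG₁ hG₂ hG₃
  ring_nf at hb₀ hb₁ hb₂ hb₃ hb₄ hh₁ hh₂ hh₃ hl₁ hl₂ hl₃ hl₄ hG₁ hG₂ hG₃
  -- `c i j` is the coefficient of `x ^ i * y ^ j`: the edges `y = 0` and `x = 0` kill the
  -- pure powers, the hypotenuse and the Lyness points the mixed monomials.
  obtain ⟨hc₀₀, hc₁₀, hc₂₀, hc₃₀, hc₄₀⟩ :
      c 0 0 = 0 ∧ c 1 0 = 0 ∧ c 2 0 = 0 ∧ c 3 0 = 0 ∧ c 4 0 = 0 := by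
    refine ⟨?_, ?_, ?_, ?_, ?_⟩ <;> linarith only [hb₀, hb₁, hb₂, hb₃, hb₄]
  obtain ⟨hc₀₁, hc₀₂, hc₀₃, hc₀₄⟩ : c 0 1 = 0 ∧ c 0 2 = 0 ∧ c 0 3 = 0 ∧ c 0 4 = 0 := by
    refine ⟨?_, ?_, ?_, ?_⟩ <;> linarith only [hc₀₀, hl₁, hl₂, hl₃, hl₄]
  simp only [hc₀₀, hc₁₀, hc₂₀, hc₃₀, hc₄₀, hc₀₁, hc₀₂, hc₀₃, hc₀₄, zero_mul, zero_add, add_zero]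
    at hh₁ hh₂ hh₃ hG₁ hG₂ hG₃
  obtain ⟨hc₁₁, hc₂₁, hc₃₁, hc₁₂, hc₂₂, hc₁₃⟩ :
      c 1 1 = 0 ∧ c 2 1 = 0 ∧ c 3 1 = 0 ∧ c 1 2 = 0 ∧ c 2 2 = 0 ∧ c 1 3 = 0 := by
    refine ⟨?_, ?_, ?_, ?_, ?_, ?_⟩ <;> linarith only [hh₁, hh₂, hh₃, hG₁, hG₂, hG₃]
  refine MvPolynomial.funext fun z => ?_
  simp [hp', Finset.sum_range_succ, hc₀₀, hc₁₀, hc₂₀, hc₃₀, hc₄₀, hc₀₁, hc₀₂, hc₀₃, hc₀₄,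
    hc₁₁, hc₂₁, hc₃₁, hc₁₂, hc₂₂, hc₁₃]

theorem eq_zero_of_vanishing_on_triangle {V₁ V₂ V₃ : ℝ × ℝ}
    (hspan : affineSpan ℝ (Set.range ![V₁, V₂, V₃]) = ⊤) {p : MvPolynomial (Fin 2) ℝ}
    (hp : p.totalDegree ≤ 4)
    (h₁₂ : ∀ x ∈ segment ℝ V₁ V₂, eval ![x.1, x.2] p = 0)
    (h₂₃ : ∀ x ∈ segment ℝ V₂ V₃, eval ![x.1, x.2] p = 0)
    (h₃₁ : ∀ x ∈ segment ℝ V₃ V₁, eval ![x.1, x.2] p = 0)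
    {G₁ G₂ G₃ : ℝ × ℝ}
    (hG₁ : G₁ = (1/2 : ℝ) • V₁ + (1/4 : ℝ) • V₂ + (1/4 : ℝ) • V₃)
    (hG₂ : G₂ = (1/4 : ℝ) • V₁ + (1/2 : ℝ) • V₂ + (1/4 : ℝ) • V₃)
    (hG₃ : G₃ = (1/4 : ℝ) • V₁ + (1/4 : ℝ) • V₂ + (1/2 : ℝ) • V₃)
    (hpG₁ : eval ![G₁.1, G₁.2] p = 0) (hpG₂ : eval ![G₂.1, G₂.2] p = 0)
    (hpG₃ : eval ![G₃.1, G₃.2] p = 0) : p = 0 := by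
  have hmem {x y : ℝ × ℝ} {t : ℝ} (ht : t ∈ Set.Icc (0 : ℝ) 1) :
      x + t • (y - x) ∈ segment ℝ x y :=
    segment_eq_image' ℝ x y ▸ Set.mem_image_of_mem _ ht
  have hchart : aeval (affineChart V₁ V₂ V₃) p = 0 := by
    refine eq_zero_of_vanishing_on_standard_triangle
      ((totalDegree_aeval_affineChart_le _ _ _ p).trans hp)
      (fun t ht => (eval_aeval_affineChart (by module) p).trans (h₁₂ _ (hmem ht)))
      (fun t ht => (eval_aeval_affineChart (by module) p).trans (h₂₃ _ (hmem ht)))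
      (fun t ht => (eval_aeval_affineChart (by module) p).trans
        (h₃₁ _ (segment_symm ℝ V₁ V₃ ▸ hmem ht)))
      ((eval_aeval_affineChart (by rw [hG₁]; module) p).trans hpG₁)
      ((eval_aeval_affineChart (by rw [hG₂]; module) p).trans hpG₂)
      ((eval_aeval_affineChart (by rw [hG₃]; module) p).trans hpG₃)
  refine MvPolynomial.funext fun z => ?_
  obtain ⟨w, hw, hz⟩ := eq_affineCombination_of_mem_affineSpan_of_fintype
    (hspan ▸ AffineSubspace.mem_top ℝ (ℝ × ℝ) (z 0, z 1))
  rw [Finset.affineCombination_eq_linear_combination _ _ _ hw, Fin.sum_univ_three] at hz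
  rw [Fin.sum_univ_three] at hw
  have hchart_z : V₁ + w 1 • (V₂ - V₁) + w 2 • (V₃ - V₁) = (z 0, z 1) := by
    rw [hz, show w 0 = 1 - w 1 - w 2 by linarith]
    simp only [Matrix.cons_val_zero, Matrix.cons_val_one, Matrix.cons_val_two,
      Matrix.head_cons, Matrix.tail_cons]
    module
  have hz' : ![(z 0, z 1).1, (z 0, z 1).2] = z := by ext i; fin_cases i <;> rfl
  rw [← hz', ← eval_aeval_affineChart hchart_z, hchart, map_zero, map_zero]

def IsQuarticBubble (V₁ V₂ V₃ : ℝ × ℝ) (v : MvPolynomial (Fin 2) ℝ) : Prop :=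
  let G₁ := (1/2 : ℝ) • V₁ + (1/4 : ℝ) • V₂ + (1/4 : ℝ) • V₃
  let G₂ := (1/4 : ℝ) • V₁ + (1/2 : ℝ) • V₂ + (1/4 : ℝ) • V₃
  let G₃ := (1/4 : ℝ) • V₁ + (1/4 : ℝ) • V₂ + (1/2 : ℝ) • V₃
  v.totalDegree ≤ 4 ∧
    (∀ x ∈ segment ℝ V₁ V₂, eval ![x.1, x.2] v = 0) ∧
    (∀ x ∈ segment ℝ V₂ V₃, eval ![x.1, x.2] v = 0) ∧
    (∀ x ∈ segment ℝ V₃ V₁, eval ![x.1, x.2] v = 0) ∧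
    eval ![G₁.1, G₁.2] v = 0 ∧ eval ![G₂.1, G₂.2] v = 0 ∧ eval ![G₃.1, G₃.2] v = 1

theorem IsQuarticBubble.unique {V₁ V₂ V₃ : ℝ × ℝ}
    (hspan : affineSpan ℝ (Set.range ![V₁, V₂, V₃]) = ⊤) {u v : MvPolynomial (Fin 2) ℝ}
    (hu : IsQuarticBubble V₁ V₂ V₃ u) (hv : IsQuarticBubble V₁ V₂ V₃ v) : u = v := by
  obtain ⟨hu, hu₁₂, hu₂₃, hu₃₁, huG₁, huG₂, huG₃⟩ := hu
  obtain ⟨hv, hv₁₂, hv₂₃, hv₃₁, hvG₁, hvG₂, hvG₃⟩ := hv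
  rw [← sub_eq_zero]
  refine eq_zero_of_vanishing_on_triangle hspan ((totalDegree_sub _ _).trans (max_le hu hv))
    (fun x hx => ?_) (fun x hx => ?_) (fun x hx => ?_) rfl rfl rfl ?_ ?_ ?_
  · rw [map_sub, hu₁₂ x hx, hv₁₂ x hx, sub_self]
  · rw [map_sub, hu₂₃ x hx, hv₂₃ x hx, sub_self]
  · rw [map_sub, hu₃₁ x hx, hv₃₁ x hx, sub_self]
  · rw [map_sub, huG₁, hvG₁, sub_self]
  · rw [map_sub, huG₂, hvG₂, sub_self]
  · rw [map_sub, huG₃, hvG₃, sub_self]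

namespace AffineBasis

variable (b : AffineBasis (Fin 3) ℝ (ℝ × ℝ))

noncomputable def quarticBubble : MvPolynomial (Fin 2) ℝ :=
  C 128 * (b.coord 0).toMvPolynomial * (b.coord 1).toMvPolynomial *
    (b.coord 2).toMvPolynomial * ((b.coord 2).toMvPolynomial - C (1 / 4))

theorem eval_quarticBubble (x : ℝ × ℝ) :
    eval ![x.1, x.2] b.quarticBubble = 128 * (∏ i, b.coord i x) * (b.coord 2 x - 1 / 4) := by
  simp [quarticBubble, AffineMap.eval_toMvPolynomial, Fin.prod_univ_three, mul_assoc]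

theorem totalDegree_quarticBubble_le : b.quarticBubble.totalDegree ≤ 4 := by
  have h i := (b.coord i).totalDegree_toMvPolynomial_le
  have h' := (totalDegree_sub_C_le (b.coord 2).toMvPolynomial (1 / 4)).trans (h 2)
  unfold quarticBubble
  grw [totalDegree_mul, totalDegree_mul, totalDegree_mul, totalDegree_mul, totalDegree_C,
    h 0, h 1, h 2, h']

theorem eval_quarticBubble_eq_zero_of_mem_segment {i j : Fin 3} {x : ℝ × ℝ}
    (hx : x ∈ segment ℝ (b i) (b j)) : eval ![x.1, x.2] b.quarticBubble = 0 := by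
  have hthird : ∀ i j : Fin 3, ∃ k, k ≠ i ∧ k ≠ j := by decide
  obtain ⟨k, hki, hkj⟩ := hthird i j
  rw [eval_quarticBubble, Finset.prod_eq_zero (Finset.mem_univ k)
    (b.coord_eq_zero_of_mem_segment hki hkj hx), mul_zero, zero_mul]

theorem eval_quarticBubble_smul_add_smul_add_smul {w₀ w₁ w₂ : ℝ} (hw : w₀ + w₁ + w₂ = 1) :
    eval ![(w₀ • b 0 + w₁ • b 1 + w₂ • b 2).1, (w₀ • b 0 + w₁ • b 1 + w₂ • b 2).2]
      b.quarticBubble = 128 * w₀ * w₁ * w₂ * (w₂ - 1 / 4) := by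
  simp only [eval_quarticBubble, Fin.prod_univ_three, b.coord_smul_add_smul_add_smul hw]
  simp only [Matrix.cons_val_zero, Matrix.cons_val_one, Matrix.cons_val_two,
    Matrix.head_cons, Matrix.tail_cons]
  ring

theorem isQuarticBubble_quarticBubble : IsQuarticBubble (b 0) (b 1) (b 2) b.quarticBubble :=
  ⟨b.totalDegree_quarticBubble_le, fun _ => b.eval_quarticBubble_eq_zero_of_mem_segment,
    fun _ => b.eval_quarticBubble_eq_zero_of_mem_segment,
    fun _ => b.eval_quarticBubble_eq_zero_of_mem_segment,
    (b.eval_quarticBubble_smul_add_smul_add_smul (by norm_num)).trans (by norm_num),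
    (b.eval_quarticBubble_smul_add_smul_add_smul (by norm_num)).trans (by norm_num),
    (b.eval_quarticBubble_smul_add_smul_add_smul (by norm_num)).trans (by norm_num)⟩

end AffineBasis

/-- The quartic bubble test function used in the proofs of Lemmas 5.3 and 6.1: there is
exactly one polynomial of total degree at most 4 vanishing on the three edges of the
triangle `V₁ V₂ V₃` with prescribed values `0, 0, 1` at the three interior Lyness
points `G₁, G₂, G₃`. -/
theorem exists_unique_quartic_bubble (V₁ V₂ V₃ : ℝ × ℝ)
    (hindep : AffineIndependent ℝ ![V₁, V₂, V₃])
    (G₁ G₂ G₃ : ℝ × ℝ)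
    (hG₁ : G₁ = (1/2 : ℝ) • V₁ + (1/4 : ℝ) • V₂ + (1/4 : ℝ) • V₃)
    (hG₂ : G₂ = (1/4 : ℝ) • V₁ + (1/2 : ℝ) • V₂ + (1/4 : ℝ) • V₃)
    (hG₃ : G₃ = (1/4 : ℝ) • V₁ + (1/4 : ℝ) • V₂ + (1/2 : ℝ) • V₃) :
    ∃! v : MvPolynomial (Fin 2) ℝ,
      v.totalDegree ≤ 4 ∧
      (∀ x ∈ segment ℝ V₁ V₂, MvPolynomial.eval ![x.1, x.2] v = 0) ∧
      (∀ x ∈ segment ℝ V₂ V₃, MvPolynomial.eval ![x.1, x.2] v = 0) ∧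
      (∀ x ∈ segment ℝ V₃ V₁, MvPolynomial.eval ![x.1, x.2] v = 0) ∧
      MvPolynomial.eval ![G₁.1, G₁.2] v = 0 ∧
      MvPolynomial.eval ![G₂.1, G₂.2] v = 0 ∧
      MvPolynomial.eval ![G₃.1, G₃.2] v = 1 := by
  subst hG₁ hG₂ hG₃
  have hspan : affineSpan ℝ (Set.range ![V₁, V₂, V₃]) = ⊤ :=
    hindep.affineSpan_eq_top_iff_card_eq_finrank_add_one.mpr (by simp)
  let b : AffineBasis (Fin 3) ℝ (ℝ × ℝ) := ⟨![V₁, V₂, V₃], hindep, hspan⟩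
  exact ⟨b.quarticBubble, b.isQuarticBubble_quarticBubble,
    fun _ hu => IsQuarticBubble.unique hspan hu b.isQuarticBubble_quarticBubble⟩
end
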